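/- Let P and Q be d×d real symmetric positive definite matrices and let A be an invertible d×d real matrix. Then Aᵀ P A and Aᵀ Q A are symmetric positive definite and δ(Aᵀ P A, Aᵀ Q A) = δ(P, Q), i.e. the AIRM distance is invariant under congruence by invertible matrices. -/

import Mathlib

open Matrix Real Classical

/-- The unique SPD square root of an SPD matrix (junk value `0` off the PSD matrices). -/
noncomputable def spdSqrt {d : ℕ} (M : Matrix (Fin d) (Fin d) ℝ) : Matrix (Fin d) (Fin d) ℝ :=
  if h : M.PosSemidef then h.1.cfc Real.sqrt else 0

/-- The matrix logarithm of a symmetric matrix, obtained by applying `Real.log` to the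
eigenvalues via the Hermitian functional calculus (junk value `0` off the Hermitian matrices). -/
noncomputable def spdLog {d : ℕ} (M : Matrix (Fin d) (Fin d) ℝ) : Matrix (Fin d) (Fin d) ℝ :=
  if h : M.IsHermitian then h.cfc Real.log else 0

/-- The Frobenius norm of a real matrix. -/
noncomputable def frobNorm {d : ℕ} (M : Matrix (Fin d) (Fin d) ℝ) : ℝ :=
  Real.sqrt (∑ i, ∑ j, (M i j) ^ 2)

/-- The affine-invariant Riemannian (AIRM) distance
`δ(P,Q) = ‖log (P^{-1/2} Q P^{-1/2})‖_F` on SPD matrices. -/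
noncomputable def airmDist {d : ℕ} (P Q : Matrix (Fin d) (Fin d) ℝ) : ℝ :=
  frobNorm (spdLog ((spdSqrt P)⁻¹ * Q * (spdSqrt P)⁻¹))

/-!
Put `S = √P` and `T = √(AᵀPA)`. The matrix `U = T⁻¹AᵀS` is orthogonal, because
`UUᵀ = T⁻¹(AᵀPA)T⁻¹ = 1`, and it carries the argument of the logarithm for `(P, Q)` to the one for
`(AᵀPA, AᵀQA)`: `U(S⁻¹QS⁻¹)Uᵀ = T⁻¹(AᵀQA)T⁻¹`. Conjugation by `U` is a star-algebra automorphism,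
so it commutes with the matrix logarithm, and it preserves the Frobenius norm.
-/

open scoped MatrixOrder ComplexOrder

namespace Matrix

section

variable {n R : Type*} [Fintype n] [DecidableEq n] [CommRing R] [StarRing R]

lemma inv_mul_star_mul_mem_unitaryGroup {a p s t : Matrix n n R} (hs : IsSelfAdjoint s)
    (ht : IsSelfAdjoint t) (htu : IsUnit t) (hsp : s * s = p) (htp : t * t = star a * p * a) :
    t⁻¹ * star a * s ∈ unitaryGroup n R := by
  have htdet := (isUnit_iff_isUnit_det t).mp htu
  rw [mem_unitaryGroup_iff, star_mul, star_mul, star_star, hs.star_eq,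
    ht.isHermitian.inv.isSelfAdjoint.star_eq]
  calc _ = t⁻¹ * (star a * (s * s) * a) * t⁻¹ := by simp only [mul_assoc]
    _ = t⁻¹ * t * (t * t⁻¹) := by rw [hsp, ← htp]; simp only [mul_assoc]
    _ = 1 := by rw [nonsing_inv_mul t htdet, mul_nonsing_inv t htdet, one_mul]

lemma inv_mul_star_mul_conj {a q s t : Matrix n n R} (hs : IsSelfAdjoint s) (hsu : IsUnit s)
    (ht : IsSelfAdjoint t) :
    t⁻¹ * star a * s * (s⁻¹ * q * s⁻¹) * star (t⁻¹ * star a * s) =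
      t⁻¹ * (star a * q * a) * t⁻¹ := by
  have hsdet := (isUnit_iff_isUnit_det s).mp hsu
  rw [star_mul, star_mul, star_star, hs.star_eq, ht.isHermitian.inv.isSelfAdjoint.star_eq]
  calc _ = t⁻¹ * star a * (s * s⁻¹) * q * (s⁻¹ * s) * a * t⁻¹ := by simp only [mul_assoc]
    _ = t⁻¹ * (star a * q * a) * t⁻¹ := by
        rw [mul_nonsing_inv s hsdet, nonsing_inv_mul s hsdet]; simp only [mul_one, mul_assoc]

end

lemma PosDef.isUnit_sqrt {n 𝕜 : Type*} [Fintype n] [DecidableEq n] [RCLike 𝕜]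
    {P : Matrix n n 𝕜} (hP : P.PosDef) : IsUnit (CFC.sqrt P) :=
  (CFC.isUnit_sqrt_iff P hP.posSemidef.nonneg).mpr hP.isUnit

end Matrix

lemma spdSqrt_eq_sqrt {d : ℕ} {P : Matrix (Fin d) (Fin d) ℝ} (hP : P.PosSemidef) :
    spdSqrt P = CFC.sqrt P := by
  rw [spdSqrt, dif_pos hP, CFC.sqrt_eq_real_sqrt P hP.nonneg, cfcₙ_eq_cfc, hP.1.cfc_eq]

lemma airmDist_eq_of_posSemidef {d : ℕ} {P : Matrix (Fin d) (Fin d) ℝ} (hP : P.PosSemidef)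
    (Q : Matrix (Fin d) (Fin d) ℝ) :
    airmDist P Q = frobNorm (spdLog ((CFC.sqrt P)⁻¹ * Q * (CFC.sqrt P)⁻¹)) := by
  rw [airmDist, spdSqrt_eq_sqrt hP]

lemma spdLog_unitary_conj {d : ℕ} {U : Matrix (Fin d) (Fin d) ℝ}
    (hU : U ∈ unitaryGroup (Fin d) ℝ) (M : Matrix (Fin d) (Fin d) ℝ) :
    spdLog (U * M * star U) = U * spdLog M * star U := by
  have hM_iff : (U * M * star U).IsHermitian ↔ M.IsHermitian := by
    simpa only [← isHermitian_iff_isSelfAdjoint] using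
      (Unitary.isUnit_coe (U := ⟨U, hU⟩)).isSelfAdjoint_conjugate_iff (a := M)
  by_cases hM : M.IsHermitian
  · have hUM := hM_iff.mpr hM
    rw [spdLog, spdLog, dif_pos hM, dif_pos hUM, ← hM.cfc_eq, ← hUM.cfc_eq]
    -- `log` is discontinuous at `0`, but every function is continuous on a finite spectrum.
    exact (StarAlgHomClass.map_cfc (Unitary.conjStarAlgAut ℝ _ ⟨U, hU⟩) Real.log M
      (M.finite_spectrum.continuousOn _) (show Continuous fun X ↦ U * X * star U by fun_prop)
      hM.isSelfAdjoint hUM.isSelfAdjoint).symm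
  · rw [spdLog, spdLog, dif_neg hM, dif_neg (mt hM_iff.mp hM), mul_zero, zero_mul]

lemma frobNorm_eq_sqrt_trace {d : ℕ} (X : Matrix (Fin d) (Fin d) ℝ) :
    frobNorm X = √(star X * X).trace := by
  rw [frobNorm, trace, Finset.sum_comm]
  simp only [diag, mul_apply, star_apply, star_trivial, sq]

lemma frobNorm_unitary_conj {d : ℕ} {U : Matrix (Fin d) (Fin d) ℝ}
    (hU : U ∈ unitaryGroup (Fin d) ℝ) (N : Matrix (Fin d) (Fin d) ℝ) :
    frobNorm (U * N * star U) = frobNorm N := by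
  have hUU : star U * U = 1 := mem_unitaryGroup_iff'.mp hU
  rw [frobNorm_eq_sqrt_trace, frobNorm_eq_sqrt_trace, star_mul, star_mul, star_star]
  congr 1
  calc (U * (star N * star U) * (U * N * star U)).trace
      = (U * (star N * (star U * U) * N) * star U).trace := by simp only [mul_assoc]
    _ = (star N * N).trace := by rw [hUU, mul_one, trace_mul_comm, ← mul_assoc, hUU, one_mul]

lemma airmDist_star_mul_mul {d : ℕ} {P A : Matrix (Fin d) (Fin d) ℝ} (hP : P.PosDef)
    (hA : IsUnit A) (Q : Matrix (Fin d) (Fin d) ℝ) :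
    airmDist (star A * P * A) (star A * Q * A) = airmDist P Q := by
  have hP' : (star A * P * A).PosDef := hA.posDef_star_left_conjugate_iff.mpr hP
  have hS := (CFC.sqrt_nonneg P).isSelfAdjoint
  have hT := (CFC.sqrt_nonneg (star A * P * A)).isSelfAdjoint
  have hU := inv_mul_star_mul_mem_unitaryGroup hS hT hP'.isUnit_sqrt
    (CFC.sqrt_mul_sqrt_self P hP.posSemidef.nonneg)
    (CFC.sqrt_mul_sqrt_self _ hP'.posSemidef.nonneg)
  rw [airmDist_eq_of_posSemidef hP'.posSemidef, airmDist_eq_of_posSemidef hP.posSemidef,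
    ← inv_mul_star_mul_conj hS hP.isUnit_sqrt hT, spdLog_unitary_conj hU,
    frobNorm_unitary_conj hU]

/-- The AIRM distance is invariant under congruence by invertible matrices. -/
theorem stmt_7 {d : ℕ} (P Q A : Matrix (Fin d) (Fin d) ℝ)
    (hP : P.PosDef) (hQ : Q.PosDef) (hA : IsUnit A) :
    (Aᵀ * P * A).PosDef ∧ (Aᵀ * Q * A).PosDef ∧
      airmDist (Aᵀ * P * A) (Aᵀ * Q * A) = airmDist P Q := by
  rw [← conjTranspose_eq_transpose_of_trivial, ← star_eq_conjTranspose]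
  exact ⟨hA.posDef_star_left_conjugate_iff.mpr hP, hA.posDef_star_left_conjugate_iff.mpr hQ,
    airmDist_star_mul_mul hP hA Q⟩
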